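/- arXiv:2601.12932 — 5 statements merged into one kernel-verified Lean document; each statement's English description precedes it below -/
import Mathlib

section
/- Let X be a preordered topological space. The elements A of Up(X) for which there exists an open U with U ∪ A = X and U ∩ A = ∅ are exactly the closed upper subsets of X. Consequently, X is upper semi-closed (the upward closure ↑x of every point is closed) if and only if every upper set of X is a union of closed upper sets. -/
open Set

theorem Set.union_eq_univ_and_inter_eq_empty_iff_eq_compl {α : Type*} {U A : Set α} :
    U ∪ A = univ ∧ U ∩ A = ∅ ↔ U = Aᶜ := by
  rw [eq_compl_iff_isCompl, isCompl_iff, and_comm, disjoint_iff, codisjoint_iff]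
  rfl

theorem exists_isOpen_union_eq_univ_inter_eq_empty_iff {X : Type*} [TopologicalSpace X]
    (A : Set X) : (∃ U : Set X, IsOpen U ∧ U ∪ A = univ ∧ U ∩ A = ∅) ↔ IsClosed A := by
  simp only [union_eq_univ_and_inter_eq_empty_iff_eq_compl, exists_eq_right, isOpen_compl_iff]

theorem IsUpperSet.sUnion_image_Ici {α : Type*} [Preorder α] {A : Set α} (hA : IsUpperSet A) :
    ⋃₀ (Ici '' A) = A :=
  subset_antisymm (sUnion_subset <| forall_mem_image.2 fun _ hx => hA.Ici_subset hx)
    fun _ hx => mem_sUnion_of_mem self_mem_Ici (mem_image_of_mem Ici hx)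

theorem IsUpperSet.eq_Ici_of_mem_of_subset {α : Type*} [Preorder α] {C : Set α} {x : α}
    (hC : IsUpperSet C) (hx : x ∈ C) (hCx : C ⊆ Ici x) : C = Ici x :=
  subset_antisymm hCx (hC.Ici_subset hx)

/-- The upper sets `A` admitting an open `U` with `U ∪ A = X` and `U ∩ A = ∅`
are exactly the closed upper sets; consequently, `X` is upper semi-closed iff
every upper set is a union of closed upper sets. -/
theorem stmt8 {X : Type*} [TopologicalSpace X] [Preorder X] :
    (∀ A : Set X, IsUpperSet A →
      ((∃ U : Set X, IsOpen U ∧ U ∪ A = Set.univ ∧ U ∩ A = ∅) ↔ IsClosed A)) ∧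
    ((∀ x : X, IsClosed (Set.Ici x)) ↔
      (∀ A : Set X, IsUpperSet A →
        ∃ S : Set (Set X), (∀ C ∈ S, IsClosed C ∧ IsUpperSet C) ∧ A = ⋃₀ S)) := by
  refine ⟨fun A _ => exists_isOpen_union_eq_univ_inter_eq_empty_iff A, ?_, ?_⟩
  · intro hIci A hA
    exact ⟨Ici '' A, forall_mem_image.2 fun x _ => ⟨hIci x, isUpperSet_Ici x⟩,
      hA.sUnion_image_Ici.symm⟩
  · intro hunion x
    obtain ⟨S, hS, hIci⟩ := hunion (Ici x) (isUpperSet_Ici x)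
    obtain ⟨C, hCS, hxC⟩ : x ∈ ⋃₀ S := hIci ▸ self_mem_Ici
    have hCsub : C ⊆ Ici x := hIci ▸ subset_sUnion_of_mem hCS
    rw [← (hS C hCS).2.eq_Ici_of_mem_of_subset hxC hCsub]
    exact (hS C hCS).1
end

section
/- Let X be a preordered topological space. X is lower semi-closed (the downward closure ↓x of every point is topologically closed) if and only if every upper set of X is an intersection of open upper sets. -/
/-!
An upper set `A` is the intersection of the complements `(↓x)ᶜ`, `x ∉ A`, which are open upper
sets as soon as each `↓x` is closed. Conversely, `(↓x)ᶜ` cannot be a proper intersection of upper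
sets: one of them must miss `x`, hence miss all of `↓x`, so it is `(↓x)ᶜ` itself and is open.
-/

open Set

section

variable {X : Type*} [Preorder X]

theorem IsUpperSet.eq_sInter_compl_Iic {A : Set X} (hA : IsUpperSet A) :
    A = ⋂₀ ((fun x => (Iic x)ᶜ) '' Aᶜ) := by
  ext y
  simp only [mem_sInter, mem_image, mem_compl_iff, mem_Iic, forall_exists_index, and_imp,
    forall_apply_eq_imp_iff₂]
  exact ⟨fun hy x hx hyx => hx (hA hyx hy), fun hy => by_contra fun hyA => hy y hyA le_rfl⟩

theorem compl_Iic_mem_of_eq_sInter {x : X} {S : Set (Set X)} (hS : ∀ U ∈ S, IsUpperSet U)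
    (hx : (Iic x)ᶜ = ⋂₀ S) : (Iic x)ᶜ ∈ S := by
  have hxS : x ∉ ⋂₀ S := hx ▸ fun h => h le_rfl
  obtain ⟨U, hU, hxU⟩ : ∃ U ∈ S, x ∉ U := by
    simpa only [mem_sInter, not_forall, exists_prop] using hxS
  have hUx : U ⊆ (Iic x)ᶜ := fun y hy hyx => hxU (hS U hU hyx hy)
  have hUx' : (Iic x)ᶜ ⊆ U := hx ▸ sInter_subset_of_mem hU
  exact (hUx.antisymm hUx').symm ▸ hU

end

/-- A preordered topological space is lower semi-closed iff every upper set is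
an intersection of open upper sets. -/
theorem stmt9 {X : Type*} [TopologicalSpace X] [Preorder X] :
    (∀ x : X, IsClosed (Set.Iic x)) ↔
      (∀ A : Set X, IsUpperSet A →
        ∃ S : Set (Set X), (∀ U ∈ S, IsOpen U ∧ IsUpperSet U) ∧ A = ⋂₀ S) := by
  constructor
  · intro hclosed A hA
    refine ⟨_, ?_, hA.eq_sInter_compl_Iic⟩
    rintro U ⟨x, -, rfl⟩
    exact ⟨(hclosed x).isOpen_compl, (isLowerSet_Iic x).compl⟩
  · intro h x
    obtain ⟨S, hS, hx⟩ := h (Iic x)ᶜ (isLowerSet_Iic x).compl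
    have hmem := compl_Iic_mem_of_eq_sInter (fun U hU => (hS U hU).2) hx
    exact isOpen_compl_iff.mp (hS _ hmem).1
end

section
/- Let X be a preordered topological space, C an irreducible closed subset of X, and x ∈ X. Then the following are equivalent: (a) for every open U and upper set A with U ∪ A = X, U meets C or x ∈ A; (b) C ∩ ↓x ≠ ∅. -/
open Set

section

variable {X : Type*} [Preorder X]

lemma compl_union_upperClosure_eq_univ (C : Set X) : Cᶜ ∪ (upperClosure C : Set X) = univ :=
  eq_univ_of_forall fun y => (em (y ∈ C)).symm.imp_right fun hy => subset_upperClosure hy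

lemma inter_nonempty_or_mem_of_union_eq_univ {C U A : Set X} (hA : IsUpperSet A) {x : X}
    (hUA : U ∪ A = univ) (hx : (C ∩ Iic x).Nonempty) : (U ∩ C).Nonempty ∨ x ∈ A := by
  obtain ⟨c, hcC, hcx⟩ := hx
  refine (em (x ∈ A)).symm.imp_left fun hxA => ⟨c, ?_, hcC⟩
  have hcA : c ∉ A := fun hcA => hxA (hA hcx hcA)
  exact ((hUA ▸ mem_univ c : c ∈ U ∪ A)).resolve_right hcA

lemma inter_Iic_nonempty_of_forall_cover [TopologicalSpace X] {C : Set X} (hCc : IsClosed C)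
    {x : X} (h : ∀ U A : Set X, IsOpen U → IsUpperSet A → U ∪ A = univ →
      (U ∩ C).Nonempty ∨ x ∈ A) : (C ∩ Iic x).Nonempty := by
  rcases h Cᶜ (upperClosure C) hCc.isOpen_compl (upperClosure C).upper
      (compl_union_upperClosure_eq_univ C) with ⟨c, hcC', hcC⟩ | hx
  · exact absurd hcC hcC'
  · obtain ⟨c, hcC, hcx⟩ := mem_upperClosure.1 hx
    exact ⟨c, hcC, hcx⟩

end

theorem stmt12_general {X : Type*} [TopologicalSpace X] [Preorder X]
    (C : Set X) (hCc : IsClosed C) (x : X) :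
    (∀ U A : Set X, IsOpen U → IsUpperSet A → U ∪ A = Set.univ →
      (U ∩ C).Nonempty ∨ x ∈ A) ↔ (C ∩ Set.Iic x).Nonempty :=
  ⟨inter_Iic_nonempty_of_forall_cover hCc,
    fun hx _ _ _ hA hUA => inter_nonempty_or_mem_of_union_eq_univ hA hUA hx⟩

/-- The totality condition on an irreducible pair `(C, x)` is equivalent to
`C ∩ ↓x ≠ ∅`. -/
theorem stmt12 {X : Type*} [TopologicalSpace X] [Preorder X]
    (C : Set X) (hC : IsIrreducible C) (hCc : IsClosed C) (x : X) :
    (∀ U A : Set X, IsOpen U → IsUpperSet A → U ∪ A = Set.univ →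
      (U ∩ C).Nonempty ∨ x ∈ A) ↔ (C ∩ Set.Iic x).Nonempty :=
  stmt12_general C hCc x
end

section
/- Let X be a preordered topological space, C an irreducible closed subset of X, and x ∈ X. Then the following are equivalent: (a) for every open U and upper set A with U ∩ A = ∅, U is disjoint from C or x ∉ A; (b) C ⊆ cl(↑x), the topological closure of the upward closure of x. -/
open Set

theorem IsUpperSet.disjoint_closure_Ici {X : Type*} [TopologicalSpace X] [Preorder X]
    {U A : Set X} (hU : IsOpen U) (hA : IsUpperSet A) (hUA : Disjoint U A) {x : X}
    (hx : x ∈ A) : Disjoint U (closure (Ici x)) :=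
  (hUA.mono_right (hA.Ici_subset hx)).closure_right hU

theorem stmt13_general {X : Type*} [TopologicalSpace X] [Preorder X]
    (C : Set X) (x : X) :
    (∀ U A : Set X, IsOpen U → IsUpperSet A → U ∩ A = ∅ →
      U ∩ C = ∅ ∨ x ∉ A) ↔ C ⊆ closure (Set.Ici x) := by
  constructor
  · intro h
    have h_compl_disjoint : (closure (Ici x))ᶜ ∩ Ici x = ∅ :=
      disjoint_iff_inter_eq_empty.mp (disjoint_compl_left.mono_right subset_closure)
    rcases h _ _ isClosed_closure.isOpen_compl (isUpperSet_Ici x) h_compl_disjoint with hC | hx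
    · exact disjoint_compl_left_iff_subset.mp (disjoint_iff_inter_eq_empty.mpr hC)
    · exact absurd self_mem_Ici hx
  · intro h U A hU hA hUA
    refine or_iff_not_imp_right.mpr fun hx => ?_
    exact disjoint_iff_inter_eq_empty.mp <|
      (hA.disjoint_closure_Ici hU (disjoint_iff_inter_eq_empty.mpr hUA) (not_not.mp hx)).mono_right h

/-- The consistency condition on an irreducible pair `(C, x)` is equivalent to
`C ⊆ cl(↑x)`. -/
theorem stmt13 {X : Type*} [TopologicalSpace X] [Preorder X]
    (C : Set X) (hC : IsIrreducible C) (hCc : IsClosed C) (x : X) :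
    (∀ U A : Set X, IsOpen U → IsUpperSet A → U ∩ A = ∅ →
      U ∩ C = ∅ ∨ x ∉ A) ↔ C ⊆ closure (Set.Ici x) :=
  stmt13_general C x
end

section
/- Let X be a preordered topological space, C an irreducible closed subset of X, and x ∈ X. Then: (a) [for every open U and upper set A, A ⊆ U implies (U meets C or x ∉ A)] if and only if C ∩ ↑x ≠ ∅; and (b) [for every open U and upper set A, U ⊆ A implies (U disjoint from C or x ∈ A)] if and only if C ⊆ cl(↓x). -/
/-!
In each equivalence the condition on all pairs `(U, A)` follows by unfolding, and one test pair
gives the converse: for (a) the open set `Cᶜ` with the upper set `↑x`, for (b) the open set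
`(cl ↓x)ᶜ` with its upper closure.
-/

open Set

section

variable {X : Type*} [TopologicalSpace X] [Preorder X]

theorem inter_Ici_nonempty_iff_forall_isOpen_isUpperSet {C : Set X} (hC : IsClosed C) (x : X) :
    (C ∩ Ici x).Nonempty ↔ ∀ U A : Set X, IsOpen U → IsUpperSet A → A ⊆ U →
      (U ∩ C).Nonempty ∨ x ∉ A := by
  refine ⟨?_, fun h => ?_⟩
  · rintro ⟨c, hcC, hxc⟩ U A - hA hAU
    by_cases hx : x ∈ A
    · exact .inl ⟨c, hAU (hA hxc hx), hcC⟩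
    · exact .inr hx
  · by_contra hempty
    have hIci : Ici x ⊆ Cᶜ := fun y hy hyC => hempty ⟨y, hyC, hy⟩
    rcases h Cᶜ (Ici x) hC.isOpen_compl (isUpperSet_Ici x) hIci with ⟨y, hyC, hy⟩ | hx
    · exact hyC hy
    · exact hx le_rfl

theorem subset_closure_Iic_iff_forall_isOpen_isUpperSet (C : Set X) (x : X) :
    C ⊆ closure (Iic x) ↔ ∀ U A : Set X, IsOpen U → IsUpperSet A → U ⊆ A →
      U ∩ C = ∅ ∨ x ∈ A := by
  refine ⟨fun h U A hU hA hUA => ?_, fun h c hcC => ?_⟩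
  · rw [or_iff_not_imp_left, ← ne_eq, ← nonempty_iff_ne_empty]
    rintro ⟨c, hcU, hcC⟩
    obtain ⟨u, hux, huU⟩ := (closure_inter_open_nonempty_iff hU).1 ⟨c, h hcC, hcU⟩
    exact hA hux (hUA huU)
  · by_contra hc
    rcases h _ _ isClosed_closure.isOpen_compl (upperClosure _).upper subset_upperClosure
      with hempty | hx
    · exact hempty.subset ⟨hc, hcC⟩
    · obtain ⟨u, hu, hux⟩ := mem_upperClosure.1 hx
      exact hu (subset_closure hux)

end

theorem stmt14_general {X : Type*} [TopologicalSpace X] [Preorder X]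
    (C : Set X) (hCc : IsClosed C) (x : X) :
    ((∀ U A : Set X, IsOpen U → IsUpperSet A → A ⊆ U →
        (U ∩ C).Nonempty ∨ x ∉ A) ↔ (C ∩ Set.Ici x).Nonempty) ∧
    ((∀ U A : Set X, IsOpen U → IsUpperSet A → U ⊆ A →
        U ∩ C = ∅ ∨ x ∈ A) ↔ C ⊆ closure (Set.Iic x)) :=
  ⟨(inter_Ici_nonempty_iff_forall_isOpen_isUpperSet hCc x).symm,
    (subset_closure_Iic_iff_forall_isOpen_isUpperSet C x).symm⟩

/-- The containment condition on an irreducible pair `(C, x)` is equivalent to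
`C ∩ ↑x ≠ ∅`, and the inclusion condition is equivalent to `C ⊆ cl(↓x)`. -/
theorem stmt14 {X : Type*} [TopologicalSpace X] [Preorder X]
    (C : Set X) (hC : IsIrreducible C) (hCc : IsClosed C) (x : X) :
    ((∀ U A : Set X, IsOpen U → IsUpperSet A → A ⊆ U →
        (U ∩ C).Nonempty ∨ x ∉ A) ↔ (C ∩ Set.Ici x).Nonempty) ∧
    ((∀ U A : Set X, IsOpen U → IsUpperSet A → U ⊆ A →
        U ∩ C = ∅ ∨ x ∈ A) ↔ C ⊆ closure (Set.Iic x)) :=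
  stmt14_general C hCc x
end
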